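/- arXiv:2205.09804 — 9 statements merged into one kernel-verified Lean document; each statement's English description precedes it below -/
import Mathlib

section
/- Fix integers r ≥ 1 and t ≥ 1, and let f_r(z) = Σ_{i=1}^r (−1)^{i+1}(z−1)^i/i be the degree-r Taylor polynomial of ln z at z = 1. Then there exists a real polynomial P of degree at most r such that for every ρ ∈ (0,1], the series Σ_{ℓ=t}^∞ C(ℓ−1, t−1)·ρ^t·(1−ρ)^{ℓ−t}·f_r(ℓρ/t) converges and equals P(ρ). In other words, h_{t,r}(ρ) := E_{Z ~ NB(t,ρ)}[f_r(Zρ/t)] is a polynomial in ρ of degree at most r. -/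
/-- The degree-`r` Taylor polynomial of `ln z` centered at `1`:
`f_r(z) = ∑_{i=1}^r (−1)^{i+1} (z−1)^i / i`. -/
noncomputable def taylorLog (r : ℕ) (z : ℝ) : ℝ :=
  ∑ i ∈ Finset.Icc 1 r, (-1 : ℝ) ^ (i + 1) / (i : ℝ) * (z - 1) ^ i

/-- The negative binomial pmf `NB(t,p)` at `ℓ`:
`nb_{t,p}(ℓ) = C(ℓ−1, t−1) · p^t · (1−p)^{ℓ−t}`. -/
noncomputable def nbPMF (t : ℕ) (p : ℝ) (ℓ : ℕ) : ℝ :=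
  ((ℓ - 1).choose (t - 1) : ℝ) * p ^ t * (1 - p) ^ (ℓ - t)

/-!
With `Z = t + n` distributed as `NB(t, ρ)`, the identity `C(Z-1, t-1) Z^(j) = t^(j) C(Z+j-1, t+j-1)`
for the rising factorial `Z^(j)` turns `E[Z^(j)]` into a negative binomial series, giving
`E[Z^(j)] = t^(j) / ρ^j`. As the rising factorials of degree `≤ m` span the polynomials of degree
`≤ m`, `E[q(Z)] = Q(ρ) / ρ^m` with `deg Q ≤ m` whenever `deg q ≤ m`. Now `f_r(Zρ/t)` is a
polynomial of degree `≤ r` in `Zρ`, and in each monomial `(Zρ)^i` the factor `ρ^i` cancels the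
pole of `E[Z^i]`.
-/

open Finset Polynomial Nat

lemma nbPMF_succ_add (k n : ℕ) (p : ℝ) :
    nbPMF (k + 1) p (k + 1 + n) = (n + k).choose k * p ^ (k + 1) * (1 - p) ^ n := by
  simp [nbPMF, add_comm n k]

lemma Nat.add_choose_mul_ascFactorial (k n j : ℕ) :
    (n + k).choose k * (n + k + 1).ascFactorial j
      = (k + 1).ascFactorial j * (n + (k + j)).choose (k + j) := by
  refine Nat.eq_of_mul_eq_mul_right (Nat.mul_pos n.factorial_pos k.factorial_pos) ?_
  calc (n + k).choose k * (n + k + 1).ascFactorial j * (n ! * k !)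
      = (n + k + j)! := by
        rw [← factorial_mul_ascFactorial, ← add_choose_mul_factorial_mul_factorial]; ring
    _ = (k + 1).ascFactorial j * (n + (k + j)).choose (k + j) * (n ! * k !) := by
        rw [add_assoc, ← add_choose_mul_factorial_mul_factorial n (k + j),
          ← factorial_mul_ascFactorial]; ring

lemma hasSum_nbPMF_mul_ascPochhammer (k j : ℕ) {p : ℝ} (hp : |1 - p| < 1) :
    HasSum (fun n : ℕ ↦
        nbPMF (k + 1) p (k + 1 + n) * (ascPochhammer ℝ j).eval ((k + 1 + n : ℕ) : ℝ))
      ((k + 1).ascFactorial j / p ^ j) := by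
  have hp₀ : p ≠ 0 := by rintro rfl; norm_num at hp
  have hgeom := (hasSum_choose_mul_geometric_of_norm_lt_one (k + j) (r := 1 - p)
    (by rwa [Real.norm_eq_abs])).mul_left ((k + 1).ascFactorial j * p ^ (k + 1))
  have hsum : (k + 1).ascFactorial j * p ^ (k + 1) * (1 / (1 - (1 - p)) ^ (k + j + 1))
      = (k + 1).ascFactorial j / p ^ j := by
    rw [sub_sub_cancel]; field_simp; ring
  rw [hsum] at hgeom
  refine hgeom.congr_fun fun n ↦ ?_
  have key : ((n + k).choose k : ℝ) * (n + k + 1 : ℕ).ascFactorial j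
      = (k + 1).ascFactorial j * (n + (k + j)).choose (k + j) := by
    exact_mod_cast Nat.add_choose_mul_ascFactorial k n j
  rw [nbPMF_succ_add, ← Nat.cast_ascFactorial, show k + 1 + n = n + k + 1 by ring]
  linear_combination p ^ (k + 1) * (1 - p) ^ n * key

lemma Polynomial.exists_eq_C_mul_add_of_natDegree_le {R : Type*} [CommRing R] {g q : R[X]}
    (hg : g.Monic) {m : ℕ} (hgdeg : g.natDegree = m + 1) (hq : q.natDegree ≤ m + 1) :
    ∃ (c : R) (q' : R[X]), q'.natDegree ≤ m ∧ q = C c * g + q' := by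
  have hquot : (q /ₘ g).natDegree ≤ 0 := by rw [natDegree_divByMonic _ hg]; omega
  have hg₁ : g ≠ 1 := by rintro rfl; simp at hgdeg
  refine ⟨(q /ₘ g).coeff 0, q %ₘ g, ?_, ?_⟩
  · have := natDegree_modByMonic_lt q hg hg₁; omega
  · rw [← eq_C_of_natDegree_le_zero hquot, mul_comm, add_comm, modByMonic_add_div]

lemma exists_hasSum_nbPMF_mul_eval (k m : ℕ) {q : ℝ[X]} (hq : q.natDegree ≤ m) :
    ∃ Q : ℝ[X], Q.natDegree ≤ m ∧ ∀ p : ℝ, |1 - p| < 1 →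
      HasSum (fun n : ℕ ↦ nbPMF (k + 1) p (k + 1 + n) * q.eval ((k + 1 + n : ℕ) : ℝ))
        (Q.eval p / p ^ m) := by
  induction m generalizing q with
  | zero =>
    refine ⟨q, hq, fun p hp ↦ ?_⟩
    rw [eq_C_of_natDegree_le_zero hq]
    simpa using (hasSum_nbPMF_mul_ascPochhammer k 0 hp).mul_right (q.coeff 0)
  | succ m ih =>
    obtain ⟨c, q', hq', rfl⟩ := exists_eq_C_mul_add_of_natDegree_le
      (monic_ascPochhammer ℝ (m + 1)) (ascPochhammer_natDegree ℝ (m + 1)) hq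
    obtain ⟨Q', hQ'deg, hQ'⟩ := ih hq'
    refine ⟨C (c * (k + 1).ascFactorial (m + 1)) + X * Q', ?_, fun p hp ↦ ?_⟩
    · refine (natDegree_add_le _ _).trans (max_le ((natDegree_C _).trans_le (zero_le _)) ?_)
      exact natDegree_mul_le.trans (by rw [natDegree_X]; omega)
    have hp₀ : p ≠ 0 := by rintro rfl; norm_num at hp
    have hsum : c * ((k + 1).ascFactorial (m + 1) / p ^ (m + 1)) + Q'.eval p / p ^ m
        = (C (c * (k + 1).ascFactorial (m + 1)) + X * Q').eval p / p ^ (m + 1) := by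
      simp only [eval_add, eval_C, eval_mul, eval_X]
      field_simp
      ring
    rw [← hsum]
    refine (((hasSum_nbPMF_mul_ascPochhammer k (m + 1) hp).mul_left c).add (hQ' p hp)).congr_fun
      fun n ↦ ?_
    simp only [eval_add, eval_mul, eval_C]
    ring

lemma exists_hasSum_nbPMF_mul_eval_mul (k : ℕ) (L : ℝ[X]) :
    ∃ P : ℝ[X], P.natDegree ≤ L.natDegree ∧ ∀ p : ℝ, |1 - p| < 1 →
      HasSum (fun n : ℕ ↦ nbPMF (k + 1) p (k + 1 + n) * L.eval ((k + 1 + n : ℕ) * p))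
        (P.eval p) := by
  choose Q hQdeg hQ using fun i ↦ exists_hasSum_nbPMF_mul_eval k i (natDegree_X_pow_le (R := ℝ) i)
  simp only [eval_pow, eval_X] at hQ
  refine ⟨∑ i ∈ range (L.natDegree + 1), C (L.coeff i) * Q i, ?_, fun p hp ↦ ?_⟩
  · refine natDegree_sum_le_of_forall_le _ _ fun i hi ↦ ?_
    exact natDegree_C_mul_le _ _ |>.trans <| (hQdeg i).trans (by rw [mem_range] at hi; omega)
  have hp₀ : p ≠ 0 := by rintro rfl; norm_num at hp
  have hsum : ∑ i ∈ range (L.natDegree + 1), L.coeff i * p ^ i * ((Q i).eval p / p ^ i)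
      = (∑ i ∈ range (L.natDegree + 1), C (L.coeff i) * Q i).eval p := by
    simp only [eval_finsetSum, eval_mul, eval_C]
    exact sum_congr rfl fun i _ ↦ by field_simp
  rw [← hsum]
  refine (hasSum_sum fun i _ ↦ (hQ i p hp).mul_left (L.coeff i * p ^ i)).congr_fun fun n ↦ ?_
  rw [eval_eq_sum_range, mul_sum]
  exact sum_congr rfl fun i _ ↦ by ring

lemma exists_natDegree_le_eval_eq_taylorLog_mul (r : ℕ) (c : ℝ) :
    ∃ L : ℝ[X], L.natDegree ≤ r ∧ ∀ y : ℝ, L.eval y = taylorLog r (y * c) := by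
  refine ⟨∑ i ∈ Icc 1 r, C ((-1 : ℝ) ^ (i + 1) / i) * (X * C c - 1) ^ i, ?_, fun y ↦ ?_⟩
  · refine natDegree_sum_le_of_forall_le _ _ fun i hi ↦ ?_
    have : (X * C c - 1 : ℝ[X]).natDegree ≤ 1 := by compute_degree
    calc _ ≤ ((X * C c - 1) ^ i).natDegree := natDegree_C_mul_le _ _
      _ ≤ i * 1 := natDegree_pow_le_of_le i this
      _ ≤ r := by rw [mem_Icc] at hi; omega
  · simp [taylorLog, eval_finsetSum, mul_comm c]

theorem nb_taylor_expectation_is_polynomial_general (r t : ℕ) (ht : 1 ≤ t) :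
    ∃ P : Polynomial ℝ, P.natDegree ≤ r ∧
      ∀ ρ ∈ Set.Ioc (0 : ℝ) 1,
        Summable (fun n : ℕ =>
          nbPMF t ρ (t + n) * taylorLog r (((t + n : ℕ) : ℝ) * ρ / (t : ℝ))) ∧
        (∑' n : ℕ, nbPMF t ρ (t + n) * taylorLog r (((t + n : ℕ) : ℝ) * ρ / (t : ℝ)))
          = P.eval ρ := by
  obtain ⟨k, rfl⟩ : ∃ k, t = k + 1 := ⟨t - 1, by omega⟩
  obtain ⟨L, hLdeg, hL⟩ := exists_natDegree_le_eval_eq_taylorLog_mul r ((k + 1 : ℕ) : ℝ)⁻¹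
  obtain ⟨P, hPdeg, hP⟩ := exists_hasSum_nbPMF_mul_eval_mul k L
  refine ⟨P, hPdeg.trans hLdeg, fun ρ ⟨hρ₀, hρ₁⟩ ↦ ?_⟩
  have hsum := hP ρ (abs_sub_lt_iff.2 ⟨by linarith, by linarith⟩)
  simp only [hL, ← div_eq_mul_inv] at hsum
  exact ⟨hsum.summable, hsum.tsum_eq⟩

/-- For `r, t ≥ 1`, there is a real polynomial `P` of degree at most `r`
such that for all `ρ ∈ (0,1]`, the series
`∑_{ℓ=t}^∞ C(ℓ−1,t−1) ρ^t (1−ρ)^{ℓ−t} f_r(ℓρ/t)` converges and equals `P(ρ)`;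
i.e. `h_{t,r}(ρ) = E_{Z ~ NB(t,ρ)}[f_r(Zρ/t)]` is a polynomial of degree at most `r`. -/
theorem nb_taylor_expectation_is_polynomial (r t : ℕ) (hr : 1 ≤ r) (ht : 1 ≤ t) :
    ∃ P : Polynomial ℝ, P.natDegree ≤ r ∧
      ∀ ρ ∈ Set.Ioc (0 : ℝ) 1,
        Summable (fun n : ℕ =>
          nbPMF t ρ (t + n) * taylorLog r (((t + n : ℕ) : ℝ) * ρ / (t : ℝ))) ∧
        (∑' n : ℕ, nbPMF t ρ (t + n) * taylorLog r (((t + n : ℕ) : ℝ) * ρ / (t : ℝ)))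
          = P.eval ρ :=
  nb_taylor_expectation_is_polynomial_general r t ht
end

section
/- There exists a universal constant c > 0 with the following property. For all integers r ≥ 1 and t ≥ 1 with r² ≤ t, let P(ρ) = Σ_{i=0}^r a_i ρ^i be the polynomial of degree at most r satisfying P(ρ) = Σ_{ℓ=t}^∞ C(ℓ−1,t−1)ρ^t(1−ρ)^{ℓ−t}·f_r(ℓρ/t) for all ρ ∈ (0,1]. Then Σ_{i=0}^r |a_i| ≤ c. In particular, the linear function g with g(ρ, ρ², ..., ρ^r) = P(ρ) satisfies |g(b)| ≤ c for every b ∈ {0,1}^r. -/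
open Polynomial Finset Filter Asymptotics Topology

/-! ### The ℓ¹-norm of the coefficients of a real polynomial -/

namespace Polynomial

noncomputable def l1Norm (p : ℝ[X]) : ℝ := p.sum fun _ a => |a|

theorem l1Norm_eq_sum_range {p : ℝ[X]} {n : ℕ} (h : p.natDegree < n) :
    p.l1Norm = ∑ i ∈ range n, |p.coeff i| :=
  sum_over_range' p (fun _ => abs_zero) n h

theorem sum_range_abs_coeff_le_l1Norm (p : ℝ[X]) (n : ℕ) :
    ∑ i ∈ range n, |p.coeff i| ≤ p.l1Norm := by
  rw [l1Norm_eq_sum_range (n := max n p.natDegree + 1) (by omega)]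
  exact sum_le_sum_of_subset_of_nonneg (range_subset_range.2 (by omega))
    fun _ _ _ => abs_nonneg _

theorem l1Norm_nonneg (p : ℝ[X]) : 0 ≤ p.l1Norm :=
  sum_nonneg fun _ _ => abs_nonneg _

@[simp] theorem l1Norm_zero : l1Norm 0 = 0 := by simp [l1Norm]

@[simp] theorem l1Norm_one : l1Norm 1 = 1 := by
  rw [l1Norm_eq_sum_range (n := 1) (by simp)]
  simp

theorem l1Norm_add_le (p q : ℝ[X]) : (p + q).l1Norm ≤ p.l1Norm + q.l1Norm := by
  set n := max (p + q).natDegree (max p.natDegree q.natDegree) + 1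
  rw [l1Norm_eq_sum_range (p := p + q) (n := n) (by omega), l1Norm_eq_sum_range (p := p) (n := n)
    (by omega), l1Norm_eq_sum_range (p := q) (n := n) (by omega), ← sum_add_distrib]
  exact sum_le_sum fun i _ => (coeff_add p q i).symm ▸ abs_add_le _ _

@[simp] theorem l1Norm_neg (p : ℝ[X]) : (-p).l1Norm = p.l1Norm := by
  simp [l1Norm, sum_def]

theorem l1Norm_sub_le (p q : ℝ[X]) : (p - q).l1Norm ≤ p.l1Norm + q.l1Norm := by
  simpa [sub_eq_add_neg] using l1Norm_add_le p (-q)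

theorem l1Norm_sum_le {ι : Type*} (s : Finset ι) (f : ι → ℝ[X]) :
    (∑ i ∈ s, f i).l1Norm ≤ ∑ i ∈ s, (f i).l1Norm :=
  Finset.le_sum_of_subadditive l1Norm l1Norm_zero.le l1Norm_add_le s f

@[simp] theorem l1Norm_C_mul (a : ℝ) (p : ℝ[X]) : (C a * p).l1Norm = |a| * p.l1Norm := by
  rw [l1Norm_eq_sum_range (lt_of_le_of_lt (natDegree_C_mul_le a p) (lt_add_one _)),
    l1Norm_eq_sum_range (lt_add_one _), mul_sum]
  simp [abs_mul]

@[simp] theorem l1Norm_X_mul (p : ℝ[X]) : (X * p).l1Norm = p.l1Norm := by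
  rw [l1Norm_eq_sum_range (lt_of_le_of_lt natDegree_mul_le (by simp; omega : _ < p.natDegree + 2)),
    sum_range_succ', l1Norm_eq_sum_range (lt_add_one _)]
  simp

@[simp] theorem l1Norm_X_pow_mul (k : ℕ) (p : ℝ[X]) : (X ^ k * p).l1Norm = p.l1Norm := by
  induction k with
  | zero => simp
  | succ k ih => rw [pow_succ', mul_assoc, l1Norm_X_mul, ih]

theorem l1Norm_mul_le (p q : ℝ[X]) : (p * q).l1Norm ≤ p.l1Norm * q.l1Norm := by
  conv_lhs => rw [as_sum_support_C_mul_X_pow p, sum_mul]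
  refine (l1Norm_sum_le _ _).trans_eq ?_
  simp only [mul_assoc, l1Norm_C_mul, l1Norm_X_pow_mul]
  rw [← sum_mul]
  rfl

theorem l1Norm_derivative_le (p : ℝ[X]) : (derivative p).l1Norm ≤ p.natDegree * p.l1Norm := by
  rw [l1Norm_eq_sum_range (n := p.natDegree + 1)
      (lt_of_le_of_lt (natDegree_derivative_le p) (by omega)),
    l1Norm_eq_sum_range (lt_add_one _), mul_sum]
  calc ∑ i ∈ range (p.natDegree + 1), |(derivative p).coeff i|
      ≤ ∑ i ∈ range (p.natDegree + 1), (p.natDegree : ℝ) * |p.coeff (i + 1)| := by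
        refine sum_le_sum fun i _ => ?_
        rw [coeff_derivative, abs_mul, mul_comm]
        by_cases h : i + 1 ≤ p.natDegree
        · gcongr
          rw [abs_of_nonneg (by positivity)]
          exact_mod_cast h
        · simp [coeff_eq_zero_of_natDegree_lt (not_le.1 h)]
    _ ≤ ∑ i ∈ range (p.natDegree + 2), (p.natDegree : ℝ) * |p.coeff i| := by
        rw [sum_range_succ' _ (p.natDegree + 1)]
        exact le_add_of_nonneg_right (by positivity)
    _ = ∑ i ∈ range (p.natDegree + 1), (p.natDegree : ℝ) * |p.coeff i| := by
        rw [sum_range_succ, coeff_eq_zero_of_natDegree_lt (by omega)]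
        simp

theorem l1Norm_X : (X : ℝ[X]).l1Norm = 1 := by simpa using l1Norm_X_mul 1

theorem l1Norm_one_sub_X_le : (1 - X : ℝ[X]).l1Norm ≤ 2 := by
  simpa [l1Norm_X, one_add_one_eq_two] using l1Norm_sub_le 1 X

end Polynomial

/-! ### The central moment polynomials of the negative binomial law -/

/-- Evaluated at `ρ`, this is `E[(Zρ/t - 1)^i]` for `Z ~ NB(t, ρ)` (`hasSum_nbMomentTerm`). -/
noncomputable def nbCentralMoment (t : ℕ) : ℕ → ℝ[X]
  | 0 => 1
  | 1 => 0
  | i + 2 => C (t : ℝ)⁻¹ * (C ((i : ℝ) + 1) * (1 - X) *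
      (nbCentralMoment t (i + 1) + nbCentralMoment t i) -
      X * (1 - X) * derivative (nbCentralMoment t (i + 1)))

theorem nbCentralMoment_succ (t i : ℕ) :
    nbCentralMoment t (i + 1) = C (t : ℝ)⁻¹ * (C (i : ℝ) * (1 - X) *
      (nbCentralMoment t i + nbCentralMoment t (i - 1)) -
      X * (1 - X) * derivative (nbCentralMoment t i)) := by
  cases i with
  | zero => simp [nbCentralMoment]
  | succ i => rw [nbCentralMoment]; push_cast; rfl

theorem natDegree_nbCentralMoment_le (t i : ℕ) : (nbCentralMoment t i).natDegree ≤ i := by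
  induction i using Nat.strong_induction_on with
  | _ i ih =>
    match i with
    | 0 => simp [nbCentralMoment]
    | 1 => simp [nbCentralMoment]
    | i + 2 =>
      have h1 := ih (i + 1) (by omega)
      have h0 := ih i (by omega)
      have hlin : (1 - X : ℝ[X]).natDegree ≤ 1 := by compute_degree
      have hquad : (X * (1 - X) : ℝ[X]).natDegree ≤ 2 := by compute_degree
      have hsum := natDegree_add_le_of_degree_le h1 (h0.trans (Nat.le_succ i))
      have hder : (derivative (nbCentralMoment t (i + 1))).natDegree ≤ i :=
        (natDegree_derivative_le _).trans (by omega)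
      rw [nbCentralMoment]
      refine (natDegree_C_mul_le _ _).trans ((natDegree_sub_le _ _).trans (max_le ?_ ?_))
      · have := natDegree_mul_le_of_le
          (natDegree_mul_le_of_le (natDegree_C ((i : ℝ) + 1)).le hlin) hsum
        omega
      · have := natDegree_mul_le_of_le hquad hder
        omega

theorem l1Norm_nbCentralMoment_add_two_le (t i : ℕ) :
    (nbCentralMoment t (i + 2)).l1Norm ≤
      2 * (((i : ℝ) + 1) / t) * (2 * (nbCentralMoment t (i + 1)).l1Norm +
        (nbCentralMoment t i).l1Norm) := by
  set A := nbCentralMoment t (i + 1)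
  set B := nbCentralMoment t i
  have hA := A.l1Norm_nonneg
  have hB := B.l1Norm_nonneg
  have hdA : (derivative A).l1Norm ≤ ((i : ℝ) + 1) * A.l1Norm := by
    refine (l1Norm_derivative_le A).trans (mul_le_mul_of_nonneg_right ?_ hA)
    exact_mod_cast natDegree_nbCentralMoment_le t (i + 1)
  have hfirst : (C ((i : ℝ) + 1) * (1 - X) * (A + B)).l1Norm ≤
      ((i : ℝ) + 1) * 2 * (A.l1Norm + B.l1Norm) := by
    refine (l1Norm_mul_le _ _).trans (mul_le_mul ?_ (l1Norm_add_le A B) (l1Norm_nonneg _)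
      (by positivity))
    rw [l1Norm_C_mul, abs_of_nonneg (by positivity)]
    exact mul_le_mul_of_nonneg_left l1Norm_one_sub_X_le (by positivity)
  have hsecond : (X * (1 - X) * derivative A).l1Norm ≤ 2 * (((i : ℝ) + 1) * A.l1Norm) := by
    rw [mul_assoc, l1Norm_X_mul]
    exact (l1Norm_mul_le _ _).trans (mul_le_mul l1Norm_one_sub_X_le hdA (l1Norm_nonneg _)
      zero_le_two)
  rw [nbCentralMoment, l1Norm_C_mul, abs_inv, Nat.abs_cast]
  calc (t : ℝ)⁻¹ * (C ((i : ℝ) + 1) * (1 - X) * (A + B) - X * (1 - X) * derivative A).l1Norm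
      ≤ (t : ℝ)⁻¹ * (((i : ℝ) + 1) * 2 * (A.l1Norm + B.l1Norm) +
          2 * (((i : ℝ) + 1) * A.l1Norm)) :=
        mul_le_mul_of_nonneg_left ((l1Norm_sub_le _ _).trans (add_le_add hfirst hsecond))
          (by positivity)
    _ = _ := by ring

theorem l1Norm_nbCentralMoment_le (t : ℕ) :
    ∀ i ≤ t, (nbCentralMoment t i).l1Norm ≤ 5 ^ i * ((i : ℝ) / t) ^ ((i + 1) / 2) := by
  intro i
  induction i using Nat.strong_induction_on with
  | _ i ih =>
    match i with
    | 0 => simp [nbCentralMoment]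
    | 1 => simp [nbCentralMoment]
    | i + 2 =>
      intro hit
      have ht : (0 : ℝ) < t := by exact_mod_cast (show 0 < t by omega)
      set y : ℝ := ((i + 2 : ℕ) : ℝ) / t
      have hy0 : 0 ≤ y := by positivity
      have hy1 : y ≤ 1 := by rw [div_le_one ht]; exact_mod_cast hit
      have hcoef : ((i : ℝ) + 1) / t ≤ y :=
        div_le_div_of_nonneg_right (by push_cast; linarith) ht.le
      have h1 : (nbCentralMoment t (i + 1)).l1Norm ≤ 5 ^ (i + 1) * y ^ ((i + 1) / 2) := by
        refine (ih (i + 1) (by omega) (by omega)).trans ?_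
        gcongr 5 ^ (i + 1) * ?_
        calc (((i + 1 : ℕ) : ℝ) / t) ^ ((i + 1 + 1) / 2) ≤ y ^ ((i + 1 + 1) / 2) := by
              gcongr
              exact div_le_div_of_nonneg_right (by push_cast; linarith) ht.le
          _ ≤ y ^ ((i + 1) / 2) := pow_le_pow_of_le_one hy0 hy1 (by omega)
      have h0 : (nbCentralMoment t i).l1Norm ≤ 5 ^ i * y ^ ((i + 1) / 2) := by
        refine (ih i (by omega) (by omega)).trans ?_
        gcongr
        exact div_le_div_of_nonneg_right (by exact_mod_cast (show i ≤ i + 2 by omega)) ht.le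
      have hexp : (i + 2 + 1) / 2 = (i + 1) / 2 + 1 := by omega
      calc (nbCentralMoment t (i + 2)).l1Norm
          ≤ 2 * (((i : ℝ) + 1) / t) * (2 * (nbCentralMoment t (i + 1)).l1Norm +
              (nbCentralMoment t i).l1Norm) := l1Norm_nbCentralMoment_add_two_le t i
        _ ≤ 2 * y * (2 * (5 ^ (i + 1) * y ^ ((i + 1) / 2)) + 5 ^ i * y ^ ((i + 1) / 2)) := by
            have := (nbCentralMoment t (i + 1)).l1Norm_nonneg
            have := (nbCentralMoment t i).l1Norm_nonneg
            gcongr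
        _ = 22 * (5 ^ i * y ^ ((i + 1) / 2) * y) := by ring
        _ ≤ 25 * (5 ^ i * y ^ ((i + 1) / 2) * y) := by gcongr; norm_num
        _ = 5 ^ (i + 2) * y ^ ((i + 2 + 1) / 2) := by rw [hexp]; ring

/-! ### The moment series, differentiated termwise in `ρ` -/

theorem nbPMF_add {t : ℕ} (ht : 1 ≤ t) (p : ℝ) (n : ℕ) :
    nbPMF t p (t + n) = ((n + (t - 1)).choose (t - 1) : ℝ) * p ^ t * (1 - p) ^ n := by
  rw [nbPMF, show t + n - 1 = n + (t - 1) by omega, Nat.add_sub_cancel_left]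

theorem hasSum_nbPMF {t : ℕ} (ht : 1 ≤ t) {p : ℝ} (hp0 : 0 < p) (hp1 : p ≤ 1) :
    HasSum (fun n => nbPMF t p (t + n)) 1 := by
  have hq : ‖1 - p‖ < 1 := by rw [Real.norm_eq_abs, abs_lt]; constructor <;> linarith
  have := (hasSum_choose_mul_geometric_of_norm_lt_one (t - 1) hq).mul_left (p ^ t)
  rw [sub_sub_cancel, Nat.sub_add_cancel ht, mul_one_div_cancel (by positivity)] at this
  simpa only [nbPMF_add ht, mul_assoc, mul_left_comm (p ^ t)] using this

theorem summable_choose_mul_pow_mul_geometric (k i : ℕ) {q : ℝ} (hq : |q| < 1) :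
    Summable fun n : ℕ => ((n + k).choose k : ℝ) * ((n : ℝ) + 1) ^ i * q ^ n := by
  refine Summable.of_norm ?_
  have hO : (fun n : ℕ => (((n + k).choose k * (n + 1) ^ i : ℕ) : ℝ)) =O[atTop]
      fun n => (((n ^ (k + i) : ℕ)) : ℝ) := by
    refine isBigO_iff.2 ⟨2 ^ (k + i), ?_⟩
    filter_upwards [eventually_ge_atTop (max k 1)] with n hn
    simp only [Real.norm_natCast]
    norm_cast
    calc (n + k).choose k * (n + 1) ^ i ≤ (2 * n) ^ k * (2 * n) ^ i := by
          gcongr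
          · exact (Nat.choose_le_choose k (by omega)).trans (Nat.choose_le_pow _ _)
          · omega
      _ = 2 ^ (k + i) * n ^ (k + i) := by ring
  simpa using summable_norm_mul_geometric_of_norm_lt_one (R := ℝ) (by simpa using hq) hO

noncomputable def nbMomentTerm (t i n : ℕ) (ρ : ℝ) : ℝ :=
  nbPMF t ρ (t + n) * (((t + n : ℕ) : ℝ) * ρ / t - 1) ^ i

theorem abs_nbMomentTerm_le {t : ℕ} (ht : 1 ≤ t) (i n : ℕ) {a ρ : ℝ} (ha : 0 ≤ a)
    (haρ : a ≤ ρ) (hρ : ρ ≤ 1) :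
    |nbMomentTerm t i n ρ| ≤
      ((n + (t - 1)).choose (t - 1) : ℝ) * ((n : ℝ) + 1) ^ i * (1 - a) ^ n := by
  have htR : (1 : ℝ) ≤ t := by exact_mod_cast ht
  have hV : |((t + n : ℕ) : ℝ) * ρ / t - 1| ≤ n + 1 := by
    have hz0 : 0 ≤ ((t + n : ℕ) : ℝ) * ρ / t :=
      div_nonneg (mul_nonneg (by positivity) (by linarith)) (by positivity)
    have hz1 : ((t + n : ℕ) : ℝ) * ρ / t ≤ 1 + n := by
      rw [div_le_iff₀ (by positivity)]
      push_cast
      nlinarith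
    rw [abs_le]
    constructor <;> linarith
  rw [nbMomentTerm, nbPMF_add ht, abs_mul, abs_mul, abs_mul, abs_pow, abs_pow, abs_pow,
    Nat.abs_cast, abs_of_nonneg (by linarith : 0 ≤ ρ), abs_of_nonneg (by linarith : 0 ≤ 1 - ρ)]
  have hρt : ρ ^ t ≤ 1 := pow_le_one₀ (by linarith) hρ
  have hq : (1 - ρ) ^ n ≤ (1 - a) ^ n := pow_le_pow_left₀ (by linarith) (by linarith) n
  calc _ ≤ ((n + (t - 1)).choose (t - 1) : ℝ) * 1 * (1 - a) ^ n * ((n : ℝ) + 1) ^ i := by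
        gcongr
        exact mul_nonneg (by positivity) (pow_nonneg (by linarith) n)
    _ = _ := by ring

-- the `ρ`-derivative of `nbMomentTerm t i n`, written through neighbouring terms so that bounds on
-- the terms also bound the derivatives
noncomputable def nbMomentTermDeriv (t i n : ℕ) (ρ : ℝ) : ℝ :=
  (i * (1 - ρ) * (nbMomentTerm t i n ρ + nbMomentTerm t (i - 1) n ρ) -
    t * nbMomentTerm t (i + 1) n ρ) / (ρ * (1 - ρ))

theorem hasDerivAt_nbMomentTerm {t : ℕ} (ht : 1 ≤ t) (i n : ℕ) {ρ : ℝ} (hρ0 : ρ ≠ 0)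
    (hρ1 : ρ ≠ 1) : HasDerivAt (nbMomentTerm t i n) (nbMomentTermDeriv t i n ρ) ρ := by
  obtain ⟨s, rfl⟩ : ∃ s, t = s + 1 := ⟨t - 1, by omega⟩
  have hs : (s : ℝ) + 1 ≠ 0 := by positivity
  have h1ρ : 1 - ρ ≠ 0 := sub_ne_zero.2 hρ1.symm
  have hV : HasDerivAt (fun x : ℝ => ((s + 1 + n : ℕ) : ℝ) * x / (s + 1 : ℕ) - 1)
      (((s + 1 + n : ℕ) : ℝ) / (s + 1 : ℕ)) ρ := by
    simpa using ((hasDerivAt_id' ρ).const_mul _).div_const ((s + 1 : ℕ) : ℝ) |>.sub_const 1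
  have hd := (((hasDerivAt_pow (s + 1) ρ).const_mul ((n + s).choose s : ℝ)).fun_mul
    (((hasDerivAt_id' ρ).const_sub 1).fun_pow n)).fun_mul (hV.fun_pow i)
  show HasDerivAt (fun x => nbMomentTerm (s + 1) i n x) _ ρ
  simp only [nbMomentTermDeriv, nbMomentTerm, nbPMF_add (Nat.le_add_left 1 s),
    Nat.add_sub_cancel]
  refine hd.congr_deriv ?_
  rcases n with _ | n <;> rcases i with _ | i <;>
    · push_cast
      simp only [div_sub_one hs, div_pow]
      field_simp
      ring

theorem abs_nbMomentTermDeriv_le {t : ℕ} (ht : 1 ≤ t) (i n : ℕ) {a b ρ : ℝ} (ha : 0 < a)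
    (hb : b < 1) (haρ : a ≤ ρ) (hρb : ρ ≤ b) :
    |nbMomentTermDeriv t i n ρ| ≤ (2 * i + t) / (a * (1 - b)) *
      (((n + (t - 1)).choose (t - 1) : ℝ) * ((n : ℝ) + 1) ^ (i + 1) * (1 - a) ^ n) := by
  set B := ((n + (t - 1)).choose (t - 1) : ℝ) * ((n : ℝ) + 1) ^ (i + 1) * (1 - a) ^ n
  have hterm : ∀ k ≤ i + 1, |nbMomentTerm t k n ρ| ≤ B := fun k hk =>
    (abs_nbMomentTerm_le ht k n ha.le haρ (hρb.trans hb.le)).trans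
      (by
        simp only [B]
        gcongr _ * ?_ * _
        · exact pow_nonneg (by linarith) n
        · exact pow_le_pow_right₀ (le_add_of_nonneg_left (Nat.cast_nonneg (α := ℝ) n)) hk)
  have hB : 0 ≤ B := (abs_nonneg _).trans (hterm 0 (by omega))
  have hnum : |i * (1 - ρ) * (nbMomentTerm t i n ρ + nbMomentTerm t (i - 1) n ρ) -
      t * nbMomentTerm t (i + 1) n ρ| ≤ (2 * i + t) * B := by
    have h1 := hterm i (by omega)
    have h2 := hterm (i - 1) (by omega)
    have h3 := hterm (i + 1) le_rfl
    have hρ1 : |1 - ρ| ≤ 1 := abs_le.2 ⟨by linarith, by linarith⟩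
    calc _ ≤ i * 1 * (B + B) + t * B := by
          refine (abs_sub _ _).trans (add_le_add ?_ ?_)
          · rw [abs_mul, abs_mul, Nat.abs_cast]
            gcongr
            exact (abs_add_le _ _).trans (add_le_add h1 h2)
          · rw [abs_mul, Nat.abs_cast]
            gcongr
      _ = (2 * i + t) * B := by ring
  have hden : a * (1 - b) ≤ |ρ * (1 - ρ)| := by
    rw [abs_of_pos (mul_pos (by linarith) (by linarith))]
    exact mul_le_mul haρ (by linarith) (by linarith) (by linarith)
  rw [nbMomentTermDeriv, abs_div, div_mul_eq_mul_div]
  exact div_le_div₀ (by positivity) hnum (mul_pos ha (by linarith)) hden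

theorem hasSum_deriv_of_hasSum {s : Set ℝ} (hs : IsOpen s) (hs' : IsPreconnected s)
    {g g' : ℕ → ℝ → ℝ} {F F' : ℝ → ℝ} {u : ℕ → ℝ} (hu : Summable u)
    (hg : ∀ n y, y ∈ s → HasDerivAt (g n) (g' n y) y) (hg' : ∀ n y, y ∈ s → ‖g' n y‖ ≤ u n)
    (hF : ∀ y ∈ s, HasSum (fun n => g n y) (F y)) (hF' : ∀ y ∈ s, HasDerivAt F (F' y) y)
    {y : ℝ} (hy : y ∈ s) : HasSum (fun n => g' n y) (F' y) := by
  have hd := hasDerivAt_tsum_of_isPreconnected hu hs hs' hg hg' hy (hF y hy).summable hy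
  have hEq : F =ᶠ[𝓝 y] fun z => ∑' n, g n z := by
    filter_upwards [hs.mem_nhds hy] with z hz using (hF z hz).tsum_eq.symm
  rw [← (hd.congr_of_eventuallyEq hEq).unique (hF' y hy)]
  exact (Summable.of_norm_bounded hu fun n => hg' n y hy).hasSum

theorem hasSum_nbMomentTerm {t : ℕ} (ht : 1 ≤ t) (i : ℕ) {ρ : ℝ} (hρ : ρ ∈ Set.Ioo 0 1) :
    HasSum (fun n => nbMomentTerm t i n ρ) ((nbCentralMoment t i).eval ρ) := by
  induction i using Nat.strong_induction_on generalizing ρ with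
  | _ i ih =>
    obtain ⟨hρ0, hρ1⟩ := hρ
    cases i with
    | zero => simpa [nbMomentTerm, nbCentralMoment] using hasSum_nbPMF ht hρ0 hρ1.le
    | succ i =>
      obtain ⟨a, ha0, haρ⟩ := exists_between hρ0
      obtain ⟨b, hρb, hb1⟩ := exists_between hρ1
      have hab : Set.Ioo a b ⊆ Set.Ioo 0 1 := Set.Ioo_subset_Ioo ha0.le hb1.le
      have hderiv : HasSum (fun n => nbMomentTermDeriv t i n ρ)
          ((derivative (nbCentralMoment t i)).eval ρ) := by
        refine hasSum_deriv_of_hasSum isOpen_Ioo isPreconnected_Ioo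
          (((summable_choose_mul_pow_mul_geometric (t - 1) (i + 1)
            (abs_lt.2 ⟨by linarith, by linarith⟩ : |1 - a| < 1)).mul_left
            ((2 * i + t) / (a * (1 - b)))))
          (fun n y hy => hasDerivAt_nbMomentTerm ht i n (hab hy).1.ne' (hab hy).2.ne)
          (fun n y hy => abs_nbMomentTermDeriv_le ht i n ha0 hb1 hy.1.le hy.2.le)
          (fun y hy => ih i (by omega) (hab hy))
          (fun y _ => (nbCentralMoment t i).hasDerivAt y)
          ⟨haρ, hρb⟩
      have hterm : ∀ n, nbMomentTerm t (i + 1) n ρ = (t : ℝ)⁻¹ * (i * (1 - ρ) *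
          (nbMomentTerm t i n ρ + nbMomentTerm t (i - 1) n ρ) -
          ρ * (1 - ρ) * nbMomentTermDeriv t i n ρ) := by
        intro n
        have : (t : ℝ) ≠ 0 := by positivity
        rw [nbMomentTermDeriv]
        field_simp
        ring
      rw [funext hterm, nbCentralMoment_succ]
      simpa using ((((ih i (by omega) ⟨hρ0, hρ1⟩).add (ih (i - 1) (by omega) ⟨hρ0, hρ1⟩)).mul_left
        (i * (1 - ρ))).sub (hderiv.mul_left (ρ * (1 - ρ)))).mul_left (t : ℝ)⁻¹

/-! ### The bias polynomial -/

noncomputable def biasPoly (t r : ℕ) : ℝ[X] :=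
  ∑ i ∈ Icc 1 r, C ((-1 : ℝ) ^ (i + 1) / i) * nbCentralMoment t i

theorem hasSum_nbPMF_mul_taylorLog {t : ℕ} (ht : 1 ≤ t) (r : ℕ) {ρ : ℝ} (hρ : ρ ∈ Set.Ioo 0 1) :
    HasSum (fun n => nbPMF t ρ (t + n) * taylorLog r (((t + n : ℕ) : ℝ) * ρ / t))
      ((biasPoly t r).eval ρ) := by
  simp only [taylorLog, mul_sum, biasPoly, eval_finsetSum, eval_mul, eval_C]
  refine hasSum_sum fun i _ => ?_
  refine ((hasSum_nbMomentTerm ht i hρ).mul_left ((-1 : ℝ) ^ (i + 1) / i)).congr_fun fun n => ?_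
  rw [nbMomentTerm]
  ring

theorem eq_biasPoly_of_eval_eq {t : ℕ} (ht : 1 ≤ t) (r : ℕ) {P : ℝ[X]}
    (hP : ∀ ρ ∈ Set.Ioo (0 : ℝ) 1,
      P.eval ρ = ∑' n : ℕ, nbPMF t ρ (t + n) * taylorLog r (((t + n : ℕ) : ℝ) * ρ / t)) :
    P = biasPoly t r :=
  eq_of_infinite_eval_eq _ _ <| (Set.Ioo_infinite zero_lt_one).mono fun _ hρ =>
    (hP _ hρ).trans (hasSum_nbPMF_mul_taylorLog ht r hρ).tsum_eq

theorem five_pow_mul_inv_pow_le {r i : ℕ} (hi : 1 ≤ i) (hir : i ≤ r) :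
    (5 : ℝ) ^ i * (1 / r) ^ ((i + 1) / 2) ≤ 25 ^ 26 / r := by
  set k := (i + 1) / 2
  have hr : (0 : ℝ) < r := by exact_mod_cast (show 0 < r by omega)
  have h5 : (5 : ℝ) ^ i ≤ 25 ^ k := by
    rw [show (25 : ℝ) = 5 ^ 2 by norm_num, ← pow_mul]
    exact pow_le_pow_right₀ (by norm_num) (by omega)
  have hle : (5 : ℝ) ^ i * (1 / r) ^ k ≤ (25 / r) ^ k := by
    rw [div_eq_mul_one_div 25, mul_pow]
    gcongr
  refine hle.trans ?_
  rw [le_div_iff₀ hr]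
  rcases le_or_gt 25 r with h25 | h25
  · have hy : 25 / (r : ℝ) ≤ 1 := by rw [div_le_one hr]; exact_mod_cast h25
    calc (25 / (r : ℝ)) ^ k * r ≤ 25 / r * r := by
          gcongr
          exact pow_le_of_le_one (by positivity) hy (by omega)
      _ ≤ 25 ^ 26 := by rw [div_mul_cancel₀ _ hr.ne']; norm_num
  · calc (25 / (r : ℝ)) ^ k * r ≤ 25 ^ 25 * 25 := by
          gcongr
          · calc (25 / (r : ℝ)) ^ k ≤ 25 ^ k := by
                  gcongr
                  exact div_le_self (by norm_num) (by exact_mod_cast (show 1 ≤ r by omega))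
              _ ≤ 25 ^ 25 := pow_le_pow_right₀ (by norm_num) (by omega)
          · exact_mod_cast h25.le
      _ = 25 ^ 26 := by norm_num

theorem l1Norm_biasPoly_le {t r : ℕ} (hr : 1 ≤ r) (hrt : r ^ 2 ≤ t) :
    (biasPoly t r).l1Norm ≤ 25 ^ 26 := by
  have hrR : (0 : ℝ) < r := by exact_mod_cast hr
  have htR : (0 : ℝ) < t := by exact_mod_cast (show 0 < t by nlinarith)
  have hterm : ∀ i ∈ Icc 1 r,
      (C ((-1 : ℝ) ^ (i + 1) / i) * nbCentralMoment t i).l1Norm ≤ 25 ^ 26 / r := by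
    intro i hi
    obtain ⟨hi1, hir⟩ := mem_Icc.1 hi
    have hit : i ≤ t := hir.trans (le_trans (Nat.le_self_pow two_ne_zero r) hrt)
    have hiR : (1 : ℝ) ≤ i := by exact_mod_cast hi1
    have hratio : (i : ℝ) / t ≤ 1 / r := by
      rw [div_le_div_iff₀ htR hrR]
      have : ((r ^ 2 : ℕ) : ℝ) ≤ t := by exact_mod_cast hrt
      have : (i : ℝ) ≤ r := by exact_mod_cast hir
      push_cast at *
      nlinarith
    rw [l1Norm_C_mul, abs_div, abs_pow, abs_neg, abs_one, one_pow, Nat.abs_cast]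
    calc 1 / (i : ℝ) * (nbCentralMoment t i).l1Norm ≤ 1 * (5 ^ i * (1 / r) ^ ((i + 1) / 2)) := by
          refine mul_le_mul (div_le_one_of_le₀ hiR (by positivity)) ?_ (l1Norm_nonneg _)
            zero_le_one
          exact (l1Norm_nbCentralMoment_le t i hit).trans (by gcongr)
      _ ≤ 25 ^ 26 / r := by rw [one_mul]; exact five_pow_mul_inv_pow_le hi1 hir
  calc (biasPoly t r).l1Norm ≤ ∑ i ∈ Icc 1 r, (25 : ℝ) ^ 26 / r :=
        (l1Norm_sum_le _ _).trans (sum_le_sum hterm)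
    _ = 25 ^ 26 := by
        rw [sum_const, Nat.card_Icc, Nat.add_sub_cancel, nsmul_eq_mul, mul_div_cancel₀ _ hrR.ne']

theorem abs_coeff_zero_add_sum_le (p : ℝ[X]) {r : ℕ} (b : Fin r → ℝ) (hb : ∀ i, |b i| ≤ 1) :
    |p.coeff 0 + ∑ i : Fin r, p.coeff (i + 1) * b i| ≤ ∑ i ∈ range (r + 1), |p.coeff i| := by
  rw [sum_range_succ', add_comm (∑ i ∈ range r, _), ← Fin.sum_univ_eq_sum_range]
  refine (abs_add_le _ _).trans (add_le_add le_rfl ((abs_sum_le_sum_abs _ _).trans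
    (sum_le_sum fun i _ => ?_)))
  rw [abs_mul]
  exact mul_le_of_le_one_right (abs_nonneg _) (hb i)

/-- There is a universal constant `c > 0` such that for all `r, t ≥ 1`
with `r² ≤ t`, if `P` is the polynomial of degree at most `r` agreeing on `(0,1]` with
`ρ ↦ E_{Z ~ NB(t,ρ)}[f_r(Zρ/t)]`, then the sum of the absolute values of the
coefficients of `P` is at most `c`; in particular the linear function
`g(b) = a₀ + ∑ᵢ a_{i+1} bᵢ` satisfies `|g(b)| ≤ c` for all `b ∈ {0,1}^r`. -/
theorem coefficients_of_bias_polynomial_bounded :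
    ∃ c : ℝ, 0 < c ∧
      ∀ r t : ℕ, 1 ≤ r → 1 ≤ t → r ^ 2 ≤ t →
        ∀ P : Polynomial ℝ, P.natDegree ≤ r →
          (∀ ρ ∈ Set.Ioc (0 : ℝ) 1,
            P.eval ρ
              = ∑' n : ℕ, nbPMF t ρ (t + n) * taylorLog r (((t + n : ℕ) : ℝ) * ρ / (t : ℝ))) →
          (∑ i ∈ Finset.range (r + 1), |P.coeff i|) ≤ c ∧
          ∀ b : Fin r → ℝ, (∀ i, b i = 0 ∨ b i = 1) →
            |P.coeff 0 + ∑ i : Fin r, P.coeff ((i : ℕ) + 1) * b i| ≤ c := by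
  refine ⟨25 ^ 26, by norm_num, fun r t hr ht hrt P _ hP => ?_⟩
  have hsum : ∑ i ∈ range (r + 1), |P.coeff i| ≤ 25 ^ 26 := by
    rw [eq_biasPoly_of_eval_eq ht r fun ρ hρ => hP ρ (Set.Ioo_subset_Ioc_self hρ)]
    exact (sum_range_abs_coeff_le_l1Norm _ _).trans (l1Norm_biasPoly_le hr hrt)
  refine ⟨hsum, fun b hb => (abs_coeff_zero_add_sum_le P b fun i => ?_).trans hsum⟩
  rcases hb i with h | h <;> simp [h]
end

section
/- For every real z > 0 and every integer r ≥ 1: | ln z − Σ_{i=1}^r (−1)^{i+1}(z−1)^i/i | ≤ |z−1|^r · |ln z|. That is, the error of the degree-r Taylor expansion of the natural logarithm at 1 is at most |z−1|^r times |ln z|. -/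
/-!
The remainder `log z - logTaylor r z` vanishes at `1` and has derivative `(1 - t) ^ r / t`
(a geometric sum), so it equals `∫ t in 1..z, (1 - t) ^ r / t`. Between `1` and `z` we have
`|1 - t| ≤ |z - 1|`, so the integral is bounded by `|z - 1| ^ r * |∫ t in 1..z, t⁻¹|`,
which is `|z - 1| ^ r * |log z|`.
-/

open Finset intervalIntegral Real

noncomputable def logTaylor (r : ℕ) (z : ℝ) : ℝ :=
  ∑ i ∈ Icc 1 r, (-1 : ℝ) ^ (i + 1) / i * (z - 1) ^ i

theorem logTaylor_eq_neg_sum_range (r : ℕ) (z : ℝ) :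
    logTaylor r z = -∑ i ∈ range r, (1 - z) ^ (i + 1) / (i + 1) := by
  induction r with
  | zero => simp [logTaylor]
  | succ r ih =>
    rw [logTaylor, sum_Icc_succ_top (by omega), ← logTaylor, ih, sum_range_succ,
      show 1 - z = -1 * (z - 1) by ring, mul_pow]
    push_cast
    ring

theorem hasDerivAt_logTaylor (r : ℕ) (t : ℝ) :
    HasDerivAt (logTaylor r) (∑ i ∈ range r, (1 - t) ^ i) t := by
  rw [funext (logTaylor_eq_neg_sum_range r), ← neg_neg (∑ i ∈ range r, (1 - t) ^ i),
    ← sum_neg_distrib]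
  refine .neg (.fun_sum fun i _ ↦ ?_)
  refine ((((hasDerivAt_id' t).const_sub 1).fun_pow (i + 1)).div_const ((i : ℝ) + 1)).congr_deriv
    ?_
  push_cast
  field_simp

theorem hasDerivAt_log_sub_logTaylor (r : ℕ) {t : ℝ} (ht : 0 < t) :
    HasDerivAt (fun z ↦ log z - logTaylor r z) ((1 - t) ^ r / t) t := by
  refine ((hasDerivAt_log ht.ne').sub (hasDerivAt_logTaylor r t)).congr_deriv ?_
  rw [geom_sum_eq (by linarith)]
  field_simp [ht.ne']
  ring

theorem pos_of_mem_uIcc_one {z t : ℝ} (hz : 0 < z) (ht : t ∈ Set.uIcc 1 z) : 0 < t :=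
  (lt_min one_pos hz).trans_le ht.1

theorem log_sub_logTaylor_eq_integral (r : ℕ) {z : ℝ} (hz : 0 < z) :
    log z - logTaylor r z = ∫ t in 1..z, (1 - t) ^ r / t := by
  have hcont : ContinuousOn (fun t : ℝ ↦ (1 - t) ^ r / t) (Set.uIcc 1 z) :=
    ((continuousOn_const.sub continuousOn_id).pow r).div continuousOn_id
      fun t ht ↦ (pos_of_mem_uIcc_one hz ht).ne'
  rw [integral_eq_sub_of_hasDerivAt
    (fun t ht ↦ hasDerivAt_log_sub_logTaylor r (pos_of_mem_uIcc_one hz ht))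
    hcont.intervalIntegrable]
  simp [logTaylor_eq_neg_sum_range]

theorem taylor_log_remainder_bound_general (z : ℝ) (hz : 0 < z) (r : ℕ) :
    |Real.log z - ∑ i ∈ Finset.Icc 1 r, (-1 : ℝ) ^ (i + 1) / (i : ℝ) * (z - 1) ^ i|
      ≤ |z - 1| ^ r * |Real.log z| := by
  have hbound : ∀ t ∈ Set.uIoc 1 z, |(1 - t) ^ r / t| ≤ |z - 1| ^ r * t⁻¹ := by
    intro t ht
    have ht' := Set.uIoc_subset_uIcc ht
    rw [abs_div, abs_pow, abs_of_pos (pos_of_mem_uIcc_one hz ht'), div_eq_mul_inv, abs_sub_comm]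
    exact mul_le_mul_of_nonneg_right
      (pow_le_pow_left₀ (abs_nonneg _) (Set.abs_sub_left_of_mem_uIcc ht') r)
      (inv_nonneg.2 (pos_of_mem_uIcc_one hz ht').le)
  have hint : IntervalIntegrable (fun t ↦ |z - 1| ^ r * t⁻¹) MeasureTheory.volume 1 z :=
    (intervalIntegrable_inv (fun t ht ↦ (pos_of_mem_uIcc_one hz ht).ne')
      continuousOn_id).const_mul _
  calc |log z - logTaylor r z| = |∫ t in 1..z, (1 - t) ^ r / t| := by
        rw [log_sub_logTaylor_eq_integral r hz]
    _ ≤ |∫ t in 1..z, |z - 1| ^ r * t⁻¹| :=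
        norm_integral_le_abs_of_norm_le (f := fun t ↦ (1 - t) ^ r / t)
          ((MeasureTheory.ae_restrict_iff' measurableSet_uIoc).2 (.of_forall hbound)) hint
    _ = |z - 1| ^ r * |log z| := by
        rw [integral_const_mul, integral_inv_of_pos one_pos hz, div_one, abs_mul, abs_pow, abs_abs]

/-- For every `z > 0` and integer `r ≥ 1`, the error of the degree-`r`
Taylor expansion of `ln` at `1` satisfies
`|ln z − ∑_{i=1}^r (−1)^{i+1}(z−1)^i/i| ≤ |z−1|^r · |ln z|`. -/
theorem taylor_log_remainder_bound (z : ℝ) (hz : 0 < z) (r : ℕ) (hr : 1 ≤ r) :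
    |Real.log z - ∑ i ∈ Finset.Icc 1 r, (-1 : ℝ) ^ (i + 1) / (i : ℝ) * (z - 1) ^ i|
      ≤ |z - 1| ^ r * |Real.log z| :=
  taylor_log_remainder_bound_general z hz r
end

section
/- There exists a universal constant C > 0 such that for every real z > 0 and every integer r ≥ 1: |z−1|^r · |ln z| ≤ C·( |z−1|^{r+1} + (9/10)^r + 𝟙{z ≤ 1/10}·ln(1/z) ), where 𝟙{z ≤ 1/10} is 1 if z ≤ 1/10 and 0 otherwise. -/
/-!
Below `z = 1/10` we have `|z - 1| ≤ 1`, so the left side is at most `|log z| = log (1/z)`.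
Above it, `log` is `10`-Lipschitz on `[1/10, ∞)`, so `|log z| ≤ 10 |z - 1|` and the left side is
at most `10 |z - 1|^(r+1)`.
-/

open Real

lemma abs_log_le_abs_sub_one_div {a z : ℝ} (ha : 0 < a) (ha1 : a ≤ 1) (hz : a ≤ z) :
    |log z| ≤ |z - 1| / a := by
  have hz0 : 0 < z := ha.trans_le hz
  rcases le_or_gt 1 z with h1 | h1
  · rw [abs_of_nonneg (log_nonneg h1), abs_of_nonneg (by linarith), le_div_iff₀ ha]
    nlinarith [log_le_sub_one_of_pos hz0, log_nonneg h1]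
  · have hlog : -log z ≤ (1 - z) / z := by
      have := one_sub_inv_le_log_of_pos hz0
      rw [sub_div, div_self hz0.ne', one_div]
      linarith
    rw [abs_of_neg (log_neg hz0 h1), abs_of_neg (by linarith)]
    calc -log z ≤ (1 - z) / z := hlog
      _ ≤ -(z - 1) / a := by rw [neg_sub]; exact div_le_div_of_nonneg_left (by linarith) ha hz

lemma abs_sub_one_pow_mul_abs_log_le_log_one_div {z : ℝ} (hz : 0 < z) (hz1 : z ≤ 1) (r : ℕ) :
    |z - 1| ^ r * |log z| ≤ log (1 / z) := by
  have hpow : |z - 1| ^ r ≤ 1 :=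
    pow_le_one₀ (abs_nonneg _) (by rw [abs_le]; constructor <;> linarith)
  rw [one_div, log_inv, ← abs_of_nonpos (log_nonpos hz.le hz1)]
  exact mul_le_of_le_one_left (abs_nonneg _) hpow

lemma abs_sub_one_pow_mul_abs_log_le {a z : ℝ} (ha : 0 < a) (ha1 : a ≤ 1) (hz : a ≤ z) (r : ℕ) :
    |z - 1| ^ r * |log z| ≤ |z - 1| ^ (r + 1) / a := by
  calc |z - 1| ^ r * |log z| ≤ |z - 1| ^ r * (|z - 1| / a) :=
        mul_le_mul_of_nonneg_left (abs_log_le_abs_sub_one_div ha ha1 hz) (by positivity)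
    _ = |z - 1| ^ (r + 1) / a := by rw [pow_succ, mul_div_assoc]

/-- There is a universal constant `C > 0` such that for all `z > 0` and
integers `r ≥ 1`:
`|z−1|^r · |ln z| ≤ C (|z−1|^{r+1} + (9/10)^r + 𝟙{z ≤ 1/10} · ln(1/z))`. -/
theorem remainder_pointwise_bound :
    ∃ C : ℝ, 0 < C ∧ ∀ z : ℝ, 0 < z → ∀ r : ℕ, 1 ≤ r →
      |z - 1| ^ r * |Real.log z|
        ≤ C * (|z - 1| ^ (r + 1) + (9 / 10 : ℝ) ^ r
            + (if z ≤ 1 / 10 then (1 : ℝ) else 0) * Real.log (1 / z)) := by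
  refine ⟨10, by norm_num, fun z hz r _ => ?_⟩
  have hpow : 0 ≤ |z - 1| ^ (r + 1) := by positivity
  have hgeom : (0 : ℝ) ≤ (9 / 10) ^ r := by positivity
  by_cases hsmall : z ≤ 1 / 10
  · have hlog : 0 ≤ log (1 / z) := log_nonneg (by rw [le_div_iff₀ hz]; linarith)
    have := abs_sub_one_pow_mul_abs_log_le_log_one_div hz (by linarith) r
    rw [if_pos hsmall]
    linarith
  · have := abs_sub_one_pow_mul_abs_log_le (by norm_num) (by norm_num) (le_of_not_ge hsmall) r
    rw [if_neg hsmall]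
    linarith
end

section
/- There exist universal constants c, C > 0 such that for every p ∈ (0,1], every integer t ≥ 1, and every real λ with |λ| ≤ c·t: Σ_{ℓ=t}^∞ C(ℓ−1,t−1)·p^t·(1−p)^{ℓ−t}·e^{λ(ℓp/t − 1)} ≤ exp( C·λ²/t ). That is, if X ~ NB(t,p) and Y = Xp/t, then Y has mean 1 and satisfies the subgamma MGF bound E[e^{λ(Y−1)}] ≤ exp(O(λ²/t)) whenever |λ| is sufficiently small relative to t. -/
open Real

theorem hasSum_nbPMF_mul_pow {t : ℕ} (ht : t ≠ 0) {p z : ℝ} (hz : ‖(1 - p) * z‖ < 1) :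
    HasSum (fun n ↦ nbPMF t p (t + n) * z ^ (t + n)) ((p * z / (1 - (1 - p) * z)) ^ t) := by
  obtain ⟨k, rfl⟩ : ∃ k, t = k + 1 := ⟨t - 1, by omega⟩
  have h := (hasSum_choose_mul_geometric_of_norm_lt_one k hz).mul_left ((p * z) ^ (k + 1))
  rw [mul_one_div, ← div_pow] at h
  refine h.congr_fun fun n ↦ ?_
  rw [nbPMF, show k + 1 + n - 1 = n + k by omega, Nat.add_sub_cancel_left, Nat.add_sub_cancel]
  simp only [mul_pow]
  ring

theorem geometric_normalized_mgf_le {p u : ℝ} (hp : 0 < p) (hp1 : p ≤ 1) (hu : |u| ≤ 1 / 4) :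
    p * exp ((p - 1) * u) ≤ exp (2 * u ^ 2) * (1 - (1 - p) * exp (p * u)) := by
  obtain ⟨hu₁, hu₂⟩ := abs_le.1 hu
  set q := 1 - p with hq_def
  have hq : 0 ≤ q := by linarith
  have hpq : q * p ≤ 1 / 4 := by nlinarith [sq_nonneg (p - q)]
  have hpu : |p * u| ≤ 1 := by
    rw [abs_mul, abs_of_pos hp]; nlinarith [abs_nonneg u]
  set A := 1 - q * u - q * p * u ^ 2
  set B := 1 + q * u + 2 * u ^ 2
  have hA : p * A ≤ 1 - q * exp (p * u) := by
    nlinarith [(abs_le.1 (abs_exp_sub_one_sub_id_le hpu)).2]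
  have hB : B ≤ exp (q * u + 2 * u ^ 2) := by linarith [add_one_le_exp (q * u + 2 * u ^ 2)]
  have hA0 : 0 ≤ A := by
    nlinarith [mul_nonneg hq (by linarith : (0 : ℝ) ≤ 1 / 4 - u),
      mul_nonneg (by linarith : (0 : ℝ) ≤ 1 / 4 - q * p) (sq_nonneg u)]
  have hB0 : 0 ≤ B := by nlinarith [mul_nonneg hq (by linarith : (0 : ℝ) ≤ u + 1 / 4)]
  have hAB : 1 ≤ A * B := by
    -- the `u²` coefficient uses `q² + q p = q`
    have hAB_sub : A * B - 1 =
        u ^ 2 * (2 - q - 2 * q * u - q * p * q * u - 2 * q * p * u ^ 2) := by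
      simp only [A, B, hq_def]; ring
    have hcoeff : 0 ≤ 2 - q - 2 * q * u - q * p * q * u - 2 * q * p * u ^ 2 := by
      nlinarith [mul_nonneg hq (mul_nonneg hq hp.le)]
    nlinarith [mul_nonneg (sq_nonneg u) hcoeff]
  calc p * exp ((p - 1) * u) ≤ p * A * B * exp ((p - 1) * u) := by
        gcongr; nlinarith
    _ ≤ (1 - q * exp (p * u)) * exp (q * u + 2 * u ^ 2) * exp ((p - 1) * u) := by
        gcongr
        exact (mul_nonneg hp.le hA0).trans hA
    _ = exp (2 * u ^ 2) * (1 - q * exp (p * u)) := by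
        rw [mul_assoc, ← exp_add, hq_def]; ring_nf

/-- There are universal constants `c, C > 0` such that for every
`p ∈ (0,1]`, every integer `t ≥ 1`, and every real `λ` with `|λ| ≤ c·t`:
`∑_{ℓ=t}^∞ C(ℓ−1,t−1) p^t (1−p)^{ℓ−t} e^{λ(ℓp/t − 1)} ≤ exp(C·λ²/t)`, i.e. if
`X ~ NB(t,p)` and `Y = Xp/t`, then `E[e^{λ(Y−1)}] ≤ exp(O(λ²/t))`. -/
theorem negBinomial_normalized_mgf_bound :
    ∃ c C : ℝ, 0 < c ∧ 0 < C ∧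
      ∀ p ∈ Set.Ioc (0 : ℝ) 1, ∀ t : ℕ, 1 ≤ t → ∀ l : ℝ, |l| ≤ c * t →
        (∑' n : ℕ, nbPMF t p (t + n) *
            Real.exp (l * (((t + n : ℕ) : ℝ) * p / (t : ℝ) - 1)))
          ≤ Real.exp (C * l ^ 2 / (t : ℝ)) := by
  refine ⟨1 / 4, 2, by norm_num, by norm_num, ?_⟩
  rintro p ⟨hp, hp1⟩ t ht l hl
  have ht₀ : (0 : ℝ) < t := by exact_mod_cast ht
  obtain ⟨u, rfl⟩ : ∃ u, l = t * u := ⟨l / t, by field_simp⟩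
  have hu : |u| ≤ 1 / 4 := by
    rw [abs_mul, Nat.abs_cast] at hl
    nlinarith
  have hgeom := geometric_normalized_mgf_le hp hp1 hu
  have hden : 0 < 1 - (1 - p) * exp (p * u) :=
    pos_of_mul_pos_right (hgeom.trans_lt' (by positivity)) (exp_pos _).le
  have hz : ‖(1 - p) * exp (p * u)‖ < 1 := by
    rw [Real.norm_of_nonneg (mul_nonneg (by linarith) (exp_pos _).le)]
    linarith
  have hsum := (hasSum_nbPMF_mul_pow (Nat.one_le_iff_ne_zero.1 ht) hz).mul_left (exp (-(t * u)))
  rw [(hsum.congr_fun fun n ↦ ?_).tsum_eq]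
  · calc exp (-(t * u)) * (p * exp (p * u) / (1 - (1 - p) * exp (p * u))) ^ t
        = (p * exp ((p - 1) * u) / (1 - (1 - p) * exp (p * u))) ^ t := by
          rw [show exp (-(t * u)) = exp (-u) ^ t by rw [← exp_nat_mul]; ring_nf, ← mul_pow,
            show (p - 1) * u = -u + p * u by ring, exp_add]
          ring
      _ ≤ exp (2 * u ^ 2) ^ t := pow_le_pow_left₀ (by positivity) ((div_le_iff₀ hden).2 hgeom) t
      _ = exp (2 * (t * u) ^ 2 / t) := by
          rw [← exp_nat_mul]
          congr 1
          field_simp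
  · rw [← exp_nat_mul, mul_left_comm, ← exp_add]
    congr 2
    push_cast
    field_simp
    ring
end

section
/- There exist a constant c > 0 and an integer t₀ ≥ 1 such that for every integer t ≥ t₀ and every p ∈ (0, 1/10]: Σ_{ℓ=t}^{⌊t/(10p)⌋} C(ℓ−1,t−1)·p^t·(1−p)^{ℓ−t}·( t/(ℓp) ) ≤ e^{−c·t}. That is, if X ~ NB(t,p) and Y = Xp/t, then E[ 𝟙{Y ≤ 1/10} / Y ] ≤ exp(−Ω(t)). -/
/-!
For `ℓ ≤ t/(10p)`, the bound `C(ℓ-1, t-1) ≤ ℓ^(t-1)/(t-1)!` turns the `ℓ`-th term into at most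
`t (ℓp)^(t-2)/(t-1)! · p(1-p)^(ℓ-t) ≤ t (t/10)^(t-2)/(t-1)! · p(1-p)^(ℓ-t)`.
The geometric weights `p(1-p)^(ℓ-t)` sum to at most `1`, and `t^t/t! ≤ e^t ≤ 3^t` bounds the
prefactor by `100 (3/10)^t = 100 (9/10)^t (1/3)^t`, which is at most `e^(-t)` once `t ≥ 44`.
-/

open Finset Nat

lemma sum_Icc_mul_one_sub_pow_sub_le_one {p : ℝ} (hp : p ≤ 1) (t L : ℕ) :
    ∑ ℓ ∈ Icc t L, p * (1 - p) ^ (ℓ - t) ≤ 1 := by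
  have hgeom : p * ∑ k ∈ range (L + 1 - t), (1 - p) ^ k = 1 - (1 - p) ^ (L + 1 - t) := by
    simpa using mul_neg_geom_sum (1 - p) (L + 1 - t)
  rw [← Finset.Ico_add_one_right_eq_Icc, ← mul_sum, sum_Ico_eq_sum_range]
  simp only [Nat.add_sub_cancel_left, hgeom]
  have : 0 ≤ (1 - p) ^ (L + 1 - t) := pow_nonneg (by linarith) _
  linarith

lemma pow_div_factorial_le_three_pow (n : ℕ) : (n : ℝ) ^ n / n ! ≤ 3 ^ n :=
  calc (n : ℝ) ^ n / n ! ≤ Real.exp n := Real.pow_div_factorial_le_exp _ (by positivity) n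
    _ = Real.exp 1 ^ n := by rw [← Real.exp_nat_mul, mul_one]
    _ ≤ 3 ^ n := by gcongr; exact Real.exp_one_lt_three.le

lemma nbPMF_mul_div_le {t ℓ : ℕ} {p : ℝ} (ht : 2 ≤ t) (htℓ : t ≤ ℓ) (hp₀ : 0 < p)
    (hp₁ : p ≤ 1) :
    nbPMF t p ℓ * (t / (ℓ * p)) ≤
      t * (ℓ * p) ^ (t - 2) / (t - 1)! * (p * (1 - p) ^ (ℓ - t)) := by
  obtain ⟨s, rfl⟩ : ∃ s, t = s + 2 := ⟨t - 2, by omega⟩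
  have hℓ : (0 : ℝ) < ℓ := by norm_cast; omega
  have hchoose : ((ℓ - 1).choose (s + 1) : ℝ) ≤ (ℓ : ℝ) ^ (s + 1) / (s + 1)! :=
    (Nat.choose_le_pow_div _ _).trans (by gcongr; exact_mod_cast Nat.sub_le ℓ 1)
  calc nbPMF (s + 2) p ℓ * ((s + 2 : ℕ) / (ℓ * p))
      = ((ℓ - 1).choose (s + 1) : ℝ) *
          (p ^ (s + 2) * (1 - p) ^ (ℓ - (s + 2)) * ((s + 2 : ℕ) / (ℓ * p))) := by
        simp only [nbPMF, show s + 2 - 1 = s + 1 from rfl]; ring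
    _ ≤ (ℓ : ℝ) ^ (s + 1) / (s + 1)! *
          (p ^ (s + 2) * (1 - p) ^ (ℓ - (s + 2)) * ((s + 2 : ℕ) / (ℓ * p))) := by
        gcongr
    _ = _ := by
        simp only [Nat.add_sub_cancel, show s + 2 - 1 = s + 1 from rfl]
        field_simp
        ring

lemma mul_pow_sub_two_div_factorial_le {t : ℕ} (ht : 2 ≤ t) :
    (t : ℝ) * (t / 10) ^ (t - 2) / (t - 1)! ≤ 100 * (3 / 10) ^ t := by
  obtain ⟨s, rfl⟩ : ∃ s, t = s + 2 := ⟨t - 2, by omega⟩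
  calc ((s + 2 : ℕ) : ℝ) * ((s + 2 : ℕ) / 10) ^ (s + 2 - 2) / (s + 2 - 1)!
      = ((s + 2 : ℕ) : ℝ) ^ (s + 2) / (s + 2)! / 10 ^ s := by
        simp only [Nat.add_sub_cancel, show s + 2 - 1 = s + 1 from rfl, Nat.factorial_succ (s + 1)]
        push_cast
        rw [div_pow]
        field_simp
        ring
    _ ≤ 3 ^ (s + 2) / 10 ^ s := by gcongr; exact pow_div_factorial_le_three_pow _
    _ = 100 * (3 / 10) ^ (s + 2) := by rw [div_pow]; field_simp; ring

lemma hundred_mul_three_tenths_pow_le_exp_neg {t : ℕ} (ht : 44 ≤ t) :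
    100 * (3 / 10 : ℝ) ^ t ≤ Real.exp (-t) := by
  have hexp : (1 / 3 : ℝ) ^ t ≤ Real.exp (-t) := by
    rw [neg_eq_neg_one_mul, mul_comm, Real.exp_nat_mul, Real.exp_neg, one_div]
    gcongr
    exact Real.exp_one_lt_three.le
  have hsmall : 100 * (9 / 10 : ℝ) ^ t ≤ 1 :=
    calc 100 * (9 / 10 : ℝ) ^ t ≤ 100 * (9 / 10) ^ 44 := by
          gcongr 100 * ?_
          exact pow_le_pow_of_le_one (by norm_num) (by norm_num) ht
      _ ≤ 1 := by norm_num
  calc 100 * (3 / 10 : ℝ) ^ t = 100 * (9 / 10) ^ t * (1 / 3) ^ t := by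
        rw [mul_assoc, ← mul_pow]; norm_num
    _ ≤ (1 / 3) ^ t := mul_le_of_le_one_left (by positivity) hsmall
    _ ≤ Real.exp (-t) := hexp

/-- There exist `c > 0` and an integer `t₀ ≥ 1` such that for every
integer `t ≥ t₀` and every `p ∈ (0, 1/10]`:
`∑_{ℓ=t}^{⌊t/(10p)⌋} C(ℓ−1,t−1) p^t (1−p)^{ℓ−t} · (t/(ℓp)) ≤ e^{−c·t}`, i.e. for
`X ~ NB(t,p)` and `Y = Xp/t` we have `E[𝟙{Y ≤ 1/10}/Y] ≤ exp(−Ω(t))`. -/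
theorem nb_lower_tail_inverse_moment_bound :
    ∃ c : ℝ, 0 < c ∧ ∃ t₀ : ℕ, 1 ≤ t₀ ∧
      ∀ t : ℕ, t₀ ≤ t → ∀ p : ℝ, p ∈ Set.Ioc (0 : ℝ) (1 / 10) →
        (∑ ℓ ∈ Finset.Icc t ⌊(t : ℝ) / (10 * p)⌋₊,
            nbPMF t p ℓ * ((t : ℝ) / ((ℓ : ℝ) * p)))
          ≤ Real.exp (-c * (t : ℝ)) := by
  refine ⟨1, one_pos, 44, by norm_num, fun t ht p ⟨hp₀, hp₁⟩ => ?_⟩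
  have hp : p ≤ 1 := by linarith
  set A : ℝ := t * (t / 10) ^ (t - 2) / (t - 1)!
  calc ∑ ℓ ∈ Icc t ⌊(t : ℝ) / (10 * p)⌋₊, nbPMF t p ℓ * (t / (ℓ * p))
      ≤ ∑ ℓ ∈ Icc t ⌊(t : ℝ) / (10 * p)⌋₊, A * (p * (1 - p) ^ (ℓ - t)) := by
        refine sum_le_sum fun ℓ hℓ => ?_
        obtain ⟨htℓ, hℓL⟩ := mem_Icc.mp hℓ
        have hℓp : ℓ * p ≤ t / 10 := by
          rw [Nat.le_floor_iff (by positivity), le_div_iff₀ (by positivity)] at hℓL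
          linarith
        refine (nbPMF_mul_div_le (by omega) htℓ hp₀ hp).trans ?_
        gcongr
        simp only [A]
        gcongr
    _ = A * ∑ ℓ ∈ Icc t ⌊(t : ℝ) / (10 * p)⌋₊, p * (1 - p) ^ (ℓ - t) :=
        (mul_sum ..).symm
    _ ≤ A :=
        mul_le_of_le_one_right (by positivity) (sum_Icc_mul_one_sub_pow_sub_le_one hp _ _)
    _ ≤ 100 * (3 / 10) ^ t := mul_pow_sub_two_div_factorial_le (by omega)
    _ ≤ Real.exp (-1 * t) := by simpa using hundred_mul_three_tenths_pow_le_exp_neg ht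
end

section
/- Let k, t ≥ 1 be integers, let p : {1,...,k} → (0,1] be a probability vector (Σ_{i=1}^k p_i = 1), and let X_max > 0 be a real number. Define D = Σ_{i=1}^k p_i · Σ_{ℓ=t}^∞ C(ℓ−1,t−1)·p_i^t·(1−p_i)^{ℓ−t}·( log₂ ℓ − log₂ min(ℓ, X_max) ). Then 0 ≤ D ≤ t·k / (X_max · ln 2). In particular, if X_max ≥ t·k/(ε·ln 2) for some ε ∈ (0,1), then 0 ≤ D ≤ ε; i.e., truncating X ~ NB(t, p_i) (with i ~ p) at X_max changes E[log₂(X/t)] by at most ε. -/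
/-!
Since `log y ≤ y - 1 < y`, truncating at `X` changes `log_b ℓ` by at most `ℓ / (X ln b)`, so the
truncation error under `NB(t, p)` is at most `E[ℓ] / (X ln b) = t / (p X ln b)`. Weighting by `p`
cancels the `1 / p`, and summing over the `k` components gives `t k / (X ln b)`.
-/

open Real

lemma nbPMF_nonneg {p : ℝ} (hp₀ : 0 ≤ p) (hp₁ : p ≤ 1) (t ℓ : ℕ) : 0 ≤ nbPMF t p ℓ := by
  have : 0 ≤ 1 - p := by linarith
  unfold nbPMF
  positivity

lemma hasSum_nbPMF_mul_self {t : ℕ} (ht : 1 ≤ t) {p : ℝ} (hp₀ : 0 < p) (hp₁ : p ≤ 1) :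
    HasSum (fun n : ℕ => nbPMF t p (t + n) * ((t + n : ℕ) : ℝ)) (t / p) := by
  obtain ⟨s, rfl⟩ : ∃ s, t = s + 1 := ⟨t - 1, by omega⟩
  have hq : ‖1 - p‖ < 1 := by
    rw [Real.norm_eq_abs, abs_lt]
    constructor <;> linarith
  have H := (hasSum_choose_mul_geometric_of_norm_lt_one (s + 1) hq).mul_left
    (((s : ℝ) + 1) * p ^ (s + 1))
  have hmean : ((s : ℝ) + 1) * p ^ (s + 1) * (1 / (1 - (1 - p)) ^ (s + 1 + 1))
      = ((s + 1 : ℕ) : ℝ) / p := by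
    rw [sub_sub_cancel]
    push_cast
    field_simp
    ring
  rw [hmean] at H
  refine H.congr_fun fun n => ?_
  have hchoose : ((s + 1 + n : ℕ) : ℝ) * ((s + n).choose s : ℝ)
      = ((n + (s + 1)).choose (s + 1) : ℝ) * ((s : ℝ) + 1) := by
    rw [show n + (s + 1) = s + n + 1 by omega, show s + 1 + n = s + n + 1 by omega]
    exact_mod_cast Nat.add_one_mul_choose_eq (s + n) s
  simp only [nbPMF, show s + 1 + n - 1 = s + n by omega, Nat.add_sub_cancel,
    show s + 1 + n - (s + 1) = n by omega]
  linear_combination (p ^ (s + 1) * (1 - p) ^ n) * hchoose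

section Truncation

variable {b L X : ℝ}

lemma logb_sub_logb_min_nonneg (hb : 1 < b) (hL : 0 < L) (hX : 0 < X) :
    0 ≤ logb b L - logb b (min L X) :=
  sub_nonneg.2 (logb_le_logb_of_le hb (lt_min hL hX) (min_le_left _ _))

lemma logb_sub_logb_min_le (hb : 1 < b) (hL : 0 ≤ L) (hX : 0 < X) :
    logb b L - logb b (min L X) ≤ L / (X * log b) := by
  have hlogb : 0 < log b := log_pos hb
  rcases le_or_gt L X with hLX | hXL
  · rw [min_eq_left hLX, sub_self]
    positivity
  · rw [min_eq_right hXL.le, ← logb_div (by linarith) hX.ne', logb, div_mul_eq_div_div]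
    exact div_le_div_of_nonneg_right (log_le_self (by positivity)) hlogb.le

variable {t : ℕ} {p : ℝ}

lemma nbPMF_mul_logb_sub_logb_min_nonneg (hb : 1 < b) (ht : 1 ≤ t) (hp₀ : 0 ≤ p)
    (hp₁ : p ≤ 1) (hX : 0 < X) (n : ℕ) :
    0 ≤ nbPMF t p (t + n) * (logb b ((t + n : ℕ) : ℝ) - logb b (min ((t + n : ℕ) : ℝ) X)) :=
  mul_nonneg (nbPMF_nonneg hp₀ hp₁ t _)
    (logb_sub_logb_min_nonneg hb (Nat.cast_pos.2 (by omega)) hX)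

lemma tsum_nbPMF_mul_logb_sub_logb_min_nonneg (hb : 1 < b) (ht : 1 ≤ t) (hp₀ : 0 ≤ p)
    (hp₁ : p ≤ 1) (hX : 0 < X) :
    0 ≤ ∑' n : ℕ, nbPMF t p (t + n) *
      (logb b ((t + n : ℕ) : ℝ) - logb b (min ((t + n : ℕ) : ℝ) X)) :=
  tsum_nonneg (nbPMF_mul_logb_sub_logb_min_nonneg hb ht hp₀ hp₁ hX)

lemma mul_tsum_nbPMF_mul_logb_sub_logb_min_le (hb : 1 < b) (ht : 1 ≤ t) (hp₀ : 0 < p)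
    (hp₁ : p ≤ 1) (hX : 0 < X) :
    p * ∑' n : ℕ, nbPMF t p (t + n) *
      (logb b ((t + n : ℕ) : ℝ) - logb b (min ((t + n : ℕ) : ℝ) X)) ≤ t / (X * log b) := by
  have hmean := (hasSum_nbPMF_mul_self ht hp₀ hp₁).div_const (X * log b)
  have hle : ∀ n : ℕ, nbPMF t p (t + n) *
      (logb b ((t + n : ℕ) : ℝ) - logb b (min ((t + n : ℕ) : ℝ) X))
      ≤ nbPMF t p (t + n) * ((t + n : ℕ) : ℝ) / (X * log b) := fun n => by
    rw [mul_div_assoc]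
    exact mul_le_mul_of_nonneg_left (logb_sub_logb_min_le hb (Nat.cast_nonneg _) hX)
      (nbPMF_nonneg hp₀.le hp₁ t _)
  have hsummable := Summable.of_nonneg_of_le
    (nbPMF_mul_logb_sub_logb_min_nonneg hb ht hp₀.le hp₁ hX) hle hmean.summable
  have htsum := hmean.tsum_eq ▸ hsummable.tsum_le_tsum hle hmean.summable
  calc p * _ ≤ p * (t / p / (X * log b)) := mul_le_mul_of_nonneg_left htsum hp₀.le
    _ = t / (X * log b) := by field_simp

end Truncation

theorem truncation_error_bound_general (k t : ℕ) (ht : 1 ≤ t)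
    (p : Fin k → ℝ) (hp : ∀ i, p i ∈ Set.Ioc (0 : ℝ) 1)
    (Xmax : ℝ) (hXmax : 0 < Xmax) :
    0 ≤ (∑ i, p i * ∑' n : ℕ, nbPMF t (p i) (t + n) *
          (Real.logb 2 ((t + n : ℕ) : ℝ)
            - Real.logb 2 (min ((t + n : ℕ) : ℝ) Xmax))) ∧
    (∑ i, p i * ∑' n : ℕ, nbPMF t (p i) (t + n) *
          (Real.logb 2 ((t + n : ℕ) : ℝ)
            - Real.logb 2 (min ((t + n : ℕ) : ℝ) Xmax)))
      ≤ (t : ℝ) * (k : ℝ) / (Xmax * Real.log 2) := by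
  constructor
  · exact Finset.sum_nonneg fun i _ => mul_nonneg (hp i).1.le
      (tsum_nbPMF_mul_logb_sub_logb_min_nonneg one_lt_two ht (hp i).1.le (hp i).2 hXmax)
  · calc _ ≤ ∑ _i : Fin k, (t : ℝ) / (Xmax * log 2) := Finset.sum_le_sum fun i _ =>
          mul_tsum_nbPMF_mul_logb_sub_logb_min_le one_lt_two ht (hp i).1 (hp i).2 hXmax
      _ = (t : ℝ) * (k : ℝ) / (Xmax * Real.log 2) := by
          rw [Finset.sum_const, Finset.card_fin, nsmul_eq_mul]
          ring

/-- For a probability vector `p` on `{1,…,k}`, integer `t ≥ 1` and real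
`X_max > 0`, the truncation error
`D = ∑_i p_i · E_{X ~ NB(t,p_i)}[log₂ X − log₂ min(X, X_max)]` satisfies
`0 ≤ D ≤ t·k / (X_max · ln 2)`. -/
theorem truncation_error_bound (k t : ℕ) (hk : 1 ≤ k) (ht : 1 ≤ t)
    (p : Fin k → ℝ) (hp : ∀ i, p i ∈ Set.Ioc (0 : ℝ) 1) (hsum : ∑ i, p i = 1)
    (Xmax : ℝ) (hXmax : 0 < Xmax) :
    0 ≤ (∑ i, p i * ∑' n : ℕ, nbPMF t (p i) (t + n) *
          (Real.logb 2 ((t + n : ℕ) : ℝ)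
            - Real.logb 2 (min ((t + n : ℕ) : ℝ) Xmax))) ∧
    (∑ i, p i * ∑' n : ℕ, nbPMF t (p i) (t + n) *
          (Real.logb 2 ((t + n : ℕ) : ℝ)
            - Real.logb 2 (min ((t + n : ℕ) : ℝ) Xmax)))
      ≤ (t : ℝ) * (k : ℝ) / (Xmax * Real.log 2) :=
  truncation_error_bound_general k t ht p hp Xmax hXmax
end

section
/- Define the iterated base-2 logarithm of a real x by log^{(0)} x = x and log^{(n+1)} x = log₂(log^{(n)} x), and for an integer k ≥ 2 let log* k be the least integer n ≥ 1 with log^{(n)} k ≤ 1. Then for every δ > 0 there exists a constant C = C(δ) such that for every integer k ≥ 2, writing L = log* k: Σ_{ℓ=1}^{L−1} 1 / (log^{(ℓ)} k)^δ ≤ C. (Note that log^{(ℓ)} k > 1 for every 1 ≤ ℓ ≤ L−1, so all summands are well defined and positive.) -/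
/-! Going down from the last index `L - 1` with `iterLog > 1`, each step exponentiates, so
`iterLog ℓ k ≥ 2 ^ (L - 1 - ℓ)`. Hence the summands are dominated by the geometric series with
ratio `2 ^ (-δ) < 1`, read backwards. -/

noncomputable def iterLog : ℕ → ℝ → ℝ
  | 0, x => x
  | n + 1, x => Real.logb 2 (iterLog n x)

open Finset Real

theorem two_pow_le_iterLog {x : ℝ} {n L : ℕ} (hnL : n < L)
    (h : ∀ i, n ≤ i → i < L → 1 < iterLog i x) : (2 : ℝ) ^ (L - 1 - n) ≤ iterLog n x := by
  obtain ⟨m, rfl⟩ : ∃ m, L = n + m + 1 := ⟨L - 1 - n, by omega⟩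
  rw [show n + m + 1 - 1 - n = m by omega]
  induction m generalizing n with
  | zero => simpa using (h n le_rfl (by omega)).le
  | succ m ih =>
    have hnext : (2 : ℝ) ^ m ≤ iterLog (n + 1) x :=
      ih (by omega) fun i hi hiL => h i (by omega) (by omega)
    have hpos : 0 < iterLog n x := one_pos.trans (h n le_rfl (by omega))
    rw [← rpow_natCast, ← le_logb_iff_rpow_le one_lt_two hpos]
    push_cast
    calc (m : ℝ) + 1 ≤ 2 ^ m := by exact_mod_cast Nat.lt_two_pow_self
      _ ≤ iterLog (n + 1) x := hnext

theorem one_div_rpow_le_of_pow_le {b y δ : ℝ} {j : ℕ} (hb : 0 < b) (hδ : 0 ≤ δ)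
    (hy : b ^ j ≤ y) : 1 / y ^ δ ≤ (b ^ (-δ)) ^ j := by
  rw [rpow_pow_comm hb.le, rpow_neg (by positivity), ← one_div]
  exact one_div_le_one_div_of_le (by positivity) (rpow_le_rpow (by positivity) hy hδ)

theorem sum_Ico_pow_reflect_le {r : ℝ} (hr0 : 0 ≤ r) (hr1 : r < 1) (L : ℕ) :
    ∑ ℓ ∈ Ico 1 L, r ^ (L - 1 - ℓ) ≤ 1 / (1 - r) := by
  calc ∑ ℓ ∈ Ico 1 L, r ^ (L - 1 - ℓ) ≤ ∑ ℓ ∈ range L, r ^ (L - 1 - ℓ) :=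
        sum_le_sum_of_subset_of_nonneg (fun ℓ hℓ => by rw [mem_Ico] at hℓ; rw [mem_range]; omega)
          fun _ _ _ => by positivity
    _ = ∑ ℓ ∈ Ico 0 L, r ^ ℓ := by rw [sum_range_reflect (r ^ ·) L, range_eq_Ico]
    _ ≤ r ^ 0 / (1 - r) := geom_sum_Ico_le_of_lt_one hr0 hr1
    _ = 1 / (1 - r) := by rw [pow_zero]

/-- For every `δ > 0` there is a constant `C = C(δ)` such that for every
integer `k ≥ 2`, with `L = log* k` (the least `n ≥ 1` with `log^{(n)} k ≤ 1`), we have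
`∑_{ℓ=1}^{L−1} 1/(log^{(ℓ)} k)^δ ≤ C`. -/
theorem iterated_log_series_bounded (δ : ℝ) (hδ : 0 < δ) :
    ∃ C : ℝ, ∀ k : ℕ, 2 ≤ k → ∀ L : ℕ,
      1 ≤ L → iterLog L (k : ℝ) ≤ 1 → (∀ n : ℕ, 1 ≤ n → n < L → 1 < iterLog n (k : ℝ)) →
      ∑ ℓ ∈ Finset.Ico 1 L, 1 / (iterLog ℓ (k : ℝ)) ^ δ ≤ C := by
  have hr1 : (2 : ℝ) ^ (-δ) < 1 := rpow_lt_one_of_one_lt_of_neg one_lt_two (neg_neg_of_pos hδ)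
  refine ⟨1 / (1 - 2 ^ (-δ)), fun k _ L _ _ hgt => ?_⟩
  calc ∑ ℓ ∈ Ico 1 L, 1 / (iterLog ℓ (k : ℝ)) ^ δ
        ≤ ∑ ℓ ∈ Ico 1 L, ((2 : ℝ) ^ (-δ)) ^ (L - 1 - ℓ) :=
        sum_le_sum fun ℓ hℓ => by
          rw [mem_Ico] at hℓ
          exact one_div_rpow_le_of_pow_le two_pos hδ.le
            (two_pow_le_iterLog hℓ.2 fun i hi hiL => hgt i (hℓ.1.trans hi) hiL)
    _ ≤ 1 / (1 - 2 ^ (-δ)) := sum_Ico_pow_reflect_le (by positivity) hr1 L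
end

section
/- For all integers r ≥ 2 and j with 1 ≤ j ≤ r, the number r!·Σ_{i=j}^r C(i,j)/i is a positive integer, and it is at most r^{2r+1}. Consequently, the j-th coefficient Σ_{i=j}^r C(i,j)·(−1)^{j−1}/i of the degree-r Taylor polynomial of log z at 1 (written in the monomial basis z^j) is a rational number whose numerator and denominator can be represented with O(r log r) bits. -/
/-!
Every `i ∈ [j, r]` with `i ≥ 1` divides `r!`, so `r! · C(i,j)/i = (r!/i) · C(i,j)` is a natural
number; the term `i = j` equals `r!/j > 0`. Each term is at most `r! · i^j ≤ r^r · r^r`, and there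
are at most `r` of them.
-/

open Finset

/-- `r! · ∑_{i=j}^r C(i,j)/i`, written with truncated division `r! / i`, which is exact for
`1 ≤ i ≤ r`. -/
def scaledLogTaylorCoeff (r j : ℕ) : ℕ :=
  ∑ i ∈ Icc j r, r.factorial / i * i.choose j

theorem cast_scaledLogTaylorCoeff {K : Type*} [Field K] [CharZero K] {r j : ℕ} (hj : 1 ≤ j) :
    (scaledLogTaylorCoeff r j : K) = r.factorial * ∑ i ∈ Icc j r, (i.choose j : K) / i := by
  rw [scaledLogTaylorCoeff, mul_sum, Nat.cast_sum]
  refine sum_congr rfl fun i hi => ?_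
  obtain ⟨hji, hir⟩ := mem_Icc.mp hi
  have hi0 : 0 < i := hj.trans hji
  rw [Nat.cast_mul, Nat.cast_div (Nat.dvd_factorial hi0 hir) (Nat.cast_ne_zero.mpr hi0.ne')]
  ring

theorem scaledLogTaylorCoeff_pos {r j : ℕ} (hj1 : 1 ≤ j) (hj2 : j ≤ r) :
    0 < scaledLogTaylorCoeff r j := by
  have hterm : 0 < r.factorial / j * j.choose j := by
    rw [Nat.choose_self, mul_one]
    exact Nat.div_pos (Nat.le_of_dvd r.factorial_pos (Nat.dvd_factorial hj1 hj2)) hj1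
  exact sum_pos' (fun _ _ => Nat.zero_le _) ⟨j, mem_Icc.mpr ⟨le_rfl, hj2⟩, hterm⟩

theorem factorial_div_mul_choose_le {r i j : ℕ} (hr : 0 < r) (hji : j ≤ i) (hir : i ≤ r) :
    r.factorial / i * i.choose j ≤ r ^ r * r ^ r := by
  have hdiv : r.factorial / i ≤ r ^ r := (Nat.div_le_self _ _).trans r.factorial_le_pow
  have hchoose : i.choose j ≤ r ^ r :=
    calc i.choose j ≤ i ^ j := Nat.choose_le_pow i j
      _ ≤ r ^ j := Nat.pow_le_pow_left hir j
      _ ≤ r ^ r := Nat.pow_le_pow_right hr (hji.trans hir)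
  exact Nat.mul_le_mul hdiv hchoose

theorem scaledLogTaylorCoeff_le {r j : ℕ} (hj : 1 ≤ j) :
    scaledLogTaylorCoeff r j ≤ r ^ (2 * r + 1) :=
  calc scaledLogTaylorCoeff r j ≤ ∑ _i ∈ Icc j r, r ^ r * r ^ r :=
        sum_le_sum fun i hi => by
          obtain ⟨hji, hir⟩ := mem_Icc.mp hi
          exact factorial_div_mul_choose_le (by omega) hji hir
    _ ≤ r * (r ^ r * r ^ r) := by
        rw [sum_const, Nat.card_Icc, smul_eq_mul]
        exact Nat.mul_le_mul_right _ (by omega)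
    _ = r ^ (2 * r + 1) := by ring

theorem taylor_coefficient_bit_complexity_general (r j : ℕ) (hj1 : 1 ≤ j)
    (hj2 : j ≤ r) :
    ∃ N : ℕ, 0 < N ∧
      ((r.factorial : ℚ) * ∑ i ∈ Finset.Icc j r, (i.choose j : ℚ) / (i : ℚ)
        = (N : ℚ)) ∧
      N ≤ r ^ (2 * r + 1) :=
  ⟨scaledLogTaylorCoeff r j, scaledLogTaylorCoeff_pos hj1 hj2,
    (cast_scaledLogTaylorCoeff hj1).symm, scaledLogTaylorCoeff_le hj1⟩

/-- For integers `r ≥ 2` and `1 ≤ j ≤ r`, the number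
`r! · ∑_{i=j}^r C(i,j)/i` is a positive integer of size at most `r^{2r+1}`. -/
theorem taylor_coefficient_bit_complexity (r j : ℕ) (hr : 2 ≤ r) (hj1 : 1 ≤ j)
    (hj2 : j ≤ r) :
    ∃ N : ℕ, 0 < N ∧
      ((r.factorial : ℚ) * ∑ i ∈ Finset.Icc j r, (i.choose j : ℚ) / (i : ℚ)
        = (N : ℚ)) ∧
      N ≤ r ^ (2 * r + 1) :=
  taylor_coefficient_bit_complexity_general r j hj1 hj2
end
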